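/- arXiv:1602.04717 — 2 statements merged into one kernel-verified Lean document; each statement's English description precedes it below -/
import Mathlib

section
/- If G is a connected graph, L is a list assignment with |L(v)| ≥ deg(v) for all v, and |L(u)| > deg(u) for at least one vertex u, then G has an L-coloring. -/
/-!
Colour the vertices greedily in order of decreasing distance to `u`. Every vertex `v ≠ u` has a
neighbour closer to `u`, which is still uncoloured when `v` is coloured, so at most `deg v - 1`
colours are forbidden at `v`; `u` is coloured last, with at most `deg u < |L u|` colours forbidden.
-/

open Finset

namespace SimpleGraph

variable {V α : Type*} (G : SimpleGraph V) (L : V → Finset α)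

def IsListColoringOn (s : Finset V) (φ : V → α) : Prop :=
  (∀ v ∈ s, φ v ∈ L v) ∧ ∀ x ∈ s, ∀ y ∈ s, G.Adj x y → φ x ≠ φ y

variable {G L}

theorem IsListColoringOn.exists_insert [DecidableEq V] [DecidableRel G.Adj] {s : Finset V}
    {φ : V → α} (hφ : G.IsListColoringOn L s φ) {a : V}
    (ha : #{w ∈ s | G.Adj a w} < #(L a)) :
    ∃ ψ : V → α, G.IsListColoringOn L (insert a s) ψ := by
  classical
  obtain ⟨c, hcL, hc⟩ : ∃ c ∈ L a, c ∉ image φ {w ∈ s | G.Adj a w} :=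
    exists_mem_notMem_of_card_lt_card (card_image_le.trans_lt ha)
  have hc' : ∀ w ∈ s, G.Adj a w → φ w ≠ c := fun w hw haw h =>
    hc (mem_image.2 ⟨w, mem_filter.2 ⟨hw, haw⟩, h⟩)
  refine ⟨Function.update φ a c, fun v hv => ?_, fun x hx y hy hxy => ?_⟩
  · rcases eq_or_ne v a with rfl | hva
    · simpa using hcL
    · rw [Function.update_of_ne hva]
      exact hφ.1 v ((mem_insert.1 hv).resolve_left hva)
  · rw [mem_insert] at hx hy
    rcases eq_or_ne x a with rfl | hxa
    · rw [Function.update_self, Function.update_of_ne hxy.ne']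
      exact (hc' y (hy.resolve_left hxy.ne') hxy).symm
    rcases eq_or_ne y a with rfl | hya
    · rw [Function.update_self, Function.update_of_ne hxa]
      exact hc' x (hx.resolve_left hxa) hxy.symm
    rw [Function.update_of_ne hxa, Function.update_of_ne hya]
    exact hφ.2 x (hx.resolve_left hxa) y (hy.resolve_left hya) hxy

theorem exists_listColoring_of_card_higher_neighbors_lt [Fintype V] [DecidableRel G.Adj]
    {β : Type*} [LinearOrder β] (r : V → β)
    (h : ∀ v, #{w ∈ G.neighborFinset v | r v ≤ r w} < #(L v)) :
    ∃ φ : V → α, (∀ v, φ v ∈ L v) ∧ ∀ x y, G.Adj x y → φ x ≠ φ y := by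
  classical
  suffices ∀ s : Finset V, ∃ φ, G.IsListColoringOn L s φ by
    obtain ⟨φ, hL, hadj⟩ := this univ
    exact ⟨φ, fun v => hL v (mem_univ v), fun x y => hadj x (mem_univ x) y (mem_univ y)⟩
  intro s
  induction s using Finset.induction_on_min_value r with
  | empty =>
    choose φ _ using fun v => card_pos.1 ((Nat.zero_le _).trans_lt (h v))
    exact ⟨φ, by simp [IsListColoringOn]⟩
  | insert a s _ has ih =>
    obtain ⟨φ, hφ⟩ := ih
    refine hφ.exists_insert ((card_le_card fun w hw => ?_).trans_lt (h a))
    rw [mem_filter] at hw ⊢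
    exact ⟨(mem_neighborFinset G a w).2 hw.2, has w hw.1⟩

theorem Connected.exists_adj_dist_lt (hG : G.Connected) {u v : V} (hv : v ≠ u) :
    ∃ w, G.Adj v w ∧ G.dist w u < G.dist v u := by
  obtain ⟨p, hp⟩ := hG.exists_walk_length_eq_dist v u
  cases p with
  | nil => exact absurd rfl hv
  | cons hvw q => exact ⟨_, hvw, hp ▸ (dist_le q).trans_lt (by simp)⟩

theorem Connected.card_neighborFinset_filter_dist_le_lt_degree [Fintype V] [DecidableRel G.Adj]
    (hG : G.Connected) {u v : V} (hv : v ≠ u) :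
    #{w ∈ G.neighborFinset v | G.dist v u ≤ G.dist w u} < G.degree v := by
  obtain ⟨w, hvw, hw⟩ := hG.exists_adj_dist_lt hv
  refine card_lt_card (filter_ssubset.2 ⟨w, (mem_neighborFinset G v w).2 hvw, ?_⟩)
  exact hw.not_ge

end SimpleGraph

/-- A connected graph with lists of size at least the degrees, one strictly larger,
has a list coloring. -/
theorem stmt3 {V : Type*} [Fintype V] (G : SimpleGraph V) [DecidableRel G.Adj]
    (hG : G.Connected) (L : V → Finset ℕ)
    (hL : ∀ v, G.degree v ≤ (L v).card) (u : V) (hu : G.degree u < (L u).card) :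
    ∃ φ : V → ℕ, (∀ v, φ v ∈ L v) ∧ ∀ x y, G.Adj x y → φ x ≠ φ y := by
  refine G.exists_listColoring_of_card_higher_neighbors_lt (G.dist · u) fun v => ?_
  rcases eq_or_ne v u with rfl | hv
  · exact (card_filter_le _ _).trans_lt hu
  · exact (hG.card_neighborFinset_filter_dist_le_lt_degree hv).trans_le (hL v)
end

section
/- If two distinct paths P1, P2 in a graph G both start at a vertex v and share their first edge vv', then their symmetric difference P1 △ P2 (as edge sets) contains a path between the other endpoints of P1 and P2 avoiding the edge vv'. -/
/-!
A path from `u` to `w ≠ u` meets every vertex in an even number of its edges, except `u` and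
`w`, which it meets in an odd number. In the symmetric difference `P₁ △ P₂` the degree of a
vertex has the parity of the sum of its degrees in `P₁` and in `P₂`, so the contributions of the
common start `v` cancel and the odd-degree vertices are exactly `a` and `b`. An edge set whose
only odd-degree vertices are `a ≠ b` contains a walk from `a` to `b`: leave `a` along one of its
edges `ac`; removing `ac` leaves `c` and `b` as the only odd vertices. Shortcutting that walk gives
the path, and it avoids `vv'` because that edge lies in both `P₁` and `P₂`.
-/

open Finset
open scoped symmDiff

namespace Finset

variable {α : Type*} [DecidableEq α]

theorem card_symmDiff_add_two_mul_card_inter (s t : Finset α) :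
    #(s ∆ t) + 2 * #(s ∩ t) = #s + #t := by
  rw [symmDiff_eq_sup_sdiff_inf, sup_eq_union, inf_eq_inter,
    card_sdiff_of_subset inter_subset_union, ← card_union_add_card_inter]
  have := card_le_card (inter_subset_union (s := s) (t := t))
  omega

theorem odd_card_filter_symmDiff_iff (s t : Finset α) (p : α → Prop) [DecidablePred p] :
    Odd #{x ∈ s ∆ t | p x} ↔ Odd (#{x ∈ s | p x} + #{x ∈ t | p x}) := by
  have hfilter : {x ∈ s ∆ t | p x} = {x ∈ s | p x} ∆ {x ∈ t | p x} := by
    ext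
    simp only [mem_filter, mem_symmDiff]
    tauto
  rw [hfilter, ← card_symmDiff_add_two_mul_card_inter]
  simp [Nat.odd_add]

theorem odd_card_filter_erase_iff {s : Finset α} {a : α} (ha : a ∈ s) (p : α → Prop)
    [DecidablePred p] : Odd #{x ∈ s.erase a | p x} ↔ (Odd #{x ∈ s | p x} ↔ ¬p a) := by
  rw [filter_erase]
  by_cases hpa : p a
  · have hmem : a ∈ {x ∈ s | p x} := mem_filter.2 ⟨ha, hpa⟩
    rw [← card_erase_add_one hmem, Nat.odd_add_one]
    simp [hpa]
  · rw [erase_eq_of_notMem (by simp [hpa])]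
    simp [hpa]

end Finset

namespace SimpleGraph

variable {V : Type*} {G : SimpleGraph V}

theorem Walk.IsPath.ne_of_mem_edges {u w : V} {p : G.Walk u w} (hp : p.IsPath) {e : Sym2 V}
    (he : e ∈ p.edges) : u ≠ w := by
  rintro rfl
  simp [(isPath_iff_nil.1 hp).eq_nil] at he

variable [DecidableEq V]

theorem Walk.IsTrail.odd_card_filter_mem_iff {u w : V} {p : G.Walk u w} (hp : p.IsTrail)
    (x : V) : Odd #{e ∈ p.edges.toFinset | x ∈ e} ↔ u ≠ w ∧ (x = u ∨ x = w) := by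
  rw [hp.edges_nodup.card_eq_countP, ← Nat.not_even_iff_odd, hp.even_countP_edges_iff]
  tauto

theorem exists_walk_of_odd_card_filter_mem_iff (s : Finset (Sym2 V))
    (hs : (s : Set (Sym2 V)) ⊆ G.edgeSet) {a b : V} (hab : a ≠ b)
    (hodd : ∀ x, Odd #{e ∈ s | x ∈ e} ↔ x = a ∨ x = b) :
    ∃ W : G.Walk a b, ∀ e ∈ W.edges, e ∈ s := by
  induction s using Finset.strongInduction generalizing a with
  | H s ih =>
  obtain ⟨e, hes⟩ : {e ∈ s | a ∈ e}.Nonempty := card_pos.1 ((hodd a).2 (.inl rfl)).pos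
  rw [mem_filter] at hes
  obtain ⟨c, rfl⟩ := Sym2.mem_iff_exists.1 hes.2
  have hac : G.Adj a c := hs hes.1
  obtain rfl | hcb := eq_or_ne c b
  · exact ⟨hac.toWalk, by simp [hes.1]⟩
  have hodd' : ∀ x, Odd #{e ∈ s.erase s(a, c) | x ∈ e} ↔ x = c ∨ x = b := by
    intro x
    rw [odd_card_filter_erase_iff hes.1, hodd, Sym2.mem_iff]
    have := hac.ne
    grind
  obtain ⟨W, hW⟩ := ih _ (erase_ssubset hes.1) (fun e he => hs (erase_subset _ _ he)) hcb hodd'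
  exact ⟨.cons hac W, by simpa [hes.1] using fun e he => mem_of_mem_erase (hW e he)⟩

end SimpleGraph

open SimpleGraph

theorem stmt16_general {V : Type*} (G : SimpleGraph V) (v v' a b : V)
    (P₁ : G.Walk v a) (P₂ : G.Walk v b) (h₁ : P₁.IsPath) (h₂ : P₂.IsPath)
    (hfirst₁ : P₁.edges.head? = some s(v, v')) (hfirst₂ : P₂.edges.head? = some s(v, v')) :
    ∃ W : G.Walk a b, W.IsPath ∧ s(v, v') ∉ W.edges ∧
      ∀ e ∈ W.edges, (e ∈ P₁.edges ∧ e ∉ P₂.edges) ∨ (e ∈ P₂.edges ∧ e ∉ P₁.edges) := by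
  classical
  have hv₁ : s(v, v') ∈ P₁.edges := List.mem_of_mem_head? hfirst₁
  have hv₂ : s(v, v') ∈ P₂.edges := List.mem_of_mem_head? hfirst₂
  obtain rfl | hab := eq_or_ne a b
  · exact ⟨.nil, .nil, by simp, by simp⟩
  set D := P₁.edges.toFinset ∆ P₂.edges.toFinset
  have hD : ∀ e, e ∈ D ↔ (e ∈ P₁.edges ∧ e ∉ P₂.edges) ∨ (e ∈ P₂.edges ∧ e ∉ P₁.edges) := by
    simp [D, mem_symmDiff]
  have hDG : (D : Set (Sym2 V)) ⊆ G.edgeSet := by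
    rintro e he
    rcases (hD e).1 he with ⟨he, -⟩ | ⟨he, -⟩
    exacts [P₁.edges_subset_edgeSet he, P₂.edges_subset_edgeSet he]
  have hodd : ∀ x, Odd #{e ∈ D | x ∈ e} ↔ x = a ∨ x = b := by
    intro x
    rw [odd_card_filter_symmDiff_iff, Nat.odd_add, ← Nat.not_odd_iff_even,
      h₁.isTrail.odd_card_filter_mem_iff, h₂.isTrail.odd_card_filter_mem_iff]
    have hva := h₁.ne_of_mem_edges hv₁
    have hvb := h₂.ne_of_mem_edges hv₂
    grind
  obtain ⟨W, hW⟩ := exists_walk_of_odd_card_filter_mem_iff D hDG hab hodd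
  have hWD : ∀ e ∈ W.bypass.edges, e ∈ D := fun e he => hW e (W.edges_bypass_subset_edges he)
  refine ⟨W.bypass, W.bypass_isPath, fun hv => ?_, fun e he => (hD e).1 (hWD e he)⟩
  rcases (hD _).1 (hWD _ hv) with ⟨-, h⟩ | ⟨-, h⟩
  exacts [h hv₂, h hv₁]

/-- If two distinct paths `P₁`, `P₂` both start at `v` and share their first edge `v v'`,
then the symmetric difference of their edge sets contains a path between their other
endpoints avoiding the edge `v v'`. -/
theorem stmt16 {V : Type*} (G : SimpleGraph V) (v v' a b : V)
    (P₁ : G.Walk v a) (P₂ : G.Walk v b) (h₁ : P₁.IsPath) (h₂ : P₂.IsPath)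
    (hdist : P₁.edges ≠ P₂.edges)
    (hfirst₁ : P₁.edges.head? = some s(v, v')) (hfirst₂ : P₂.edges.head? = some s(v, v')) :
    ∃ W : G.Walk a b, W.IsPath ∧ s(v, v') ∉ W.edges ∧
      ∀ e ∈ W.edges, (e ∈ P₁.edges ∧ e ∉ P₂.edges) ∨ (e ∈ P₂.edges ∧ e ∉ P₁.edges) :=
  stmt16_general G v v' a b P₁ P₂ h₁ h₂ hfirst₁ hfirst₂
end
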